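/- Under the standing assumptions (X geodesic, locally compact, semi-locally simply connected; α a geodesic circle and bottleneck loop; N a compact geodesically convex neighborhood of α in which α is the shortest non-contractible loop and in which every loop is freely homotopic to a k-fold concatenation of α for some k ∈ ℤ): if a triple of points in N has diameter less than |α|/2, then any two fillings of this triple in N are freely homotopic; consequently the winding number of such a triple is well defined. -/

import Mathlib

/-!
Write `P` for the perimeter of the triple. A filling, run at constant speed on `[0, 1]`, is a
`P`-Lipschitz closed path at `x₁` that passes through `x₂` and `x₃` at the times
`d(x₁, x₂) / P` and `(d(x₁, x₂) + d(x₂, x₃)) / P`, whatever the filling. Cut two fillings at these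
times: corresponding sides have common endpoints and length `< c / 2`, so one side followed by the
reverse of the other is a loop in `N` of length `< c`, hence null-homotopic. The sides are therefore
homotopic rel endpoints, hence so are the two closed paths, and the two loops are freely
homotopic. The claim about winding numbers follows by transitivity.
-/

open Set Metric
open scoped ENNReal

noncomputable section

section Loops

/-- A loop in a space `X`: a continuous map from the circle `ℝ/ℤ`
(of circumference 1). -/
abbrev MLoop (X : Type*) [TopologicalSpace X] : Type _ := C(AddCircle (1 : ℝ), X)

variable {X : Type*} [MetricSpace X]

/-- The length of a loop: its total variation over one period. -/
def loopLength (γ : MLoop X) : ℝ≥0∞ :=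
  eVariationOn (fun t : ℝ => γ (t : AddCircle (1 : ℝ))) (Set.Icc 0 1)

/-- Two loops are freely homotopic through the set `U`. -/
def FreelyHomotopicIn (U : Set X) (β γ : MLoop X) : Prop :=
  ∃ H : ContinuousMap.Homotopy β γ, Set.range ⇑H ⊆ U

/-- Two loops are freely homotopic (in all of `X`). -/
def FreelyHomotopic (β γ : MLoop X) : Prop :=
  FreelyHomotopicIn Set.univ β γ

/-- The reversed loop `α⁻`. -/
def loopReverse (γ : MLoop X) : MLoop X :=
  γ.comp ⟨fun t => -t, continuous_neg⟩

/-- The `k`-fold concatenation of a loop, realized as the composition with the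
degree-`k` self-map of the circle (the constant loop for `k = 0`, and the
`|k|`-fold concatenation of the reverse for `k < 0`). -/
def loopPow (γ : MLoop X) (k : ℤ) : MLoop X :=
  γ.comp ⟨fun t => k • t, continuous_zsmul k⟩

/-- A loop is null-homotopic (contractible) in `U` if it is freely homotopic in `U`
to a constant loop. -/
def NullHomotopicIn (U : Set X) (γ : MLoop X) : Prop :=
  ∃ x : X, FreelyHomotopicIn U γ (ContinuousMap.const _ x)

/-- `f` parametrizes a geodesic from `x` to `y` on the interval `[0, dist x y]`:
it is an isometric embedding of this interval sending `0 ↦ x`, `dist x y ↦ y`. -/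
def IsGeodesicSegment (f : ℝ → X) (x y : X) : Prop :=
  f 0 = x ∧ f (dist x y) = y ∧
    ∀ s ∈ Set.Icc (0 : ℝ) (dist x y), ∀ t ∈ Set.Icc (0 : ℝ) (dist x y),
      dist (f s) (f t) = |s - t|

/-- A metric space is geodesic if any two points are joined by a geodesic. -/
def GeodesicSpace (X : Type*) [MetricSpace X] : Prop :=
  ∀ x y : X, ∃ f : ℝ → X, IsGeodesicSegment f x y

/-- `X` is semi-locally simply connected: every point has a ball in which
every loop is null-homotopic in `X`. -/
def SemiLocallySimplyConnected (X : Type*) [MetricSpace X] : Prop :=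
  ∀ x : X, ∃ δ > (0 : ℝ), ∀ γ : MLoop X, Set.range ⇑γ ⊆ Metric.ball x δ →
    NullHomotopicIn Set.univ γ

/-- `α` is a geodesic circle of circumference `c` in `X`: as a map from the circle
of circumference `1` it rescales the (geodesic) circle distance by the factor `c`;
equivalently it corresponds to an isometric embedding of `S¹_c` into `X`. -/
def IsGeodesicCircle (α : MLoop X) (c : ℝ) : Prop :=
  0 < c ∧ ∀ s t : AddCircle (1 : ℝ), dist (α s) (α t) = c * dist s t

/-- A bottleneck loop: a loop of finite length that is a shortest representative
of its free (unoriented) homotopy class within some neighbourhood of its image. -/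
def IsBottleneckLoop (α : MLoop X) : Prop :=
  loopLength α ≠ ⊤ ∧
  ∃ U : Set X, IsOpen U ∧ Set.range ⇑α ⊆ U ∧
    ∀ β : MLoop X, Set.range ⇑β ⊆ U →
      (FreelyHomotopicIn U β α ∨ FreelyHomotopicIn U β (loopReverse α)) →
      loopLength α ≤ loopLength β

/-- A set is geodesically convex if every geodesic between its points lies in it. -/
def GeodesicallyConvex (N : Set X) : Prop :=
  ∀ x ∈ N, ∀ y ∈ N, ∀ f : ℝ → X, IsGeodesicSegment f x y →
    ∀ t ∈ Set.Icc (0 : ℝ) (dist x y), f t ∈ N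

/-- The perimeter of a triple: the length of any of its fillings. -/
def triplePerim (x₁ x₂ x₃ : X) : ℝ := dist x₁ x₂ + dist x₂ x₃ + dist x₃ x₁

/-- The diameter of a triple of points. -/
def tripleDiam (x₁ x₂ x₃ : X) : ℝ := max (dist x₁ x₂) (max (dist x₂ x₃) (dist x₃ x₁))

/-- The diameter of a quadruple of points. -/
def quadDiam (x₁ x₂ x₃ x₄ : X) : ℝ :=
  max (tripleDiam x₁ x₂ x₃) (max (dist x₁ x₄) (max (dist x₂ x₄) (dist x₃ x₄)))

/-- `f : ℝ → X` traverses a filling of the (oriented) triple `(x₁, x₂, x₃)`: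
it concatenates geodesics from `x₁` to `x₂`, from `x₂` to `x₃` and from `x₃` to
`x₁`, parametrized by arc length on `[0, triplePerim x₁ x₂ x₃]`. -/
def IsFillingFun (x₁ x₂ x₃ : X) (f : ℝ → X) : Prop :=
  f 0 = x₁ ∧ f (dist x₁ x₂) = x₂ ∧ f (dist x₁ x₂ + dist x₂ x₃) = x₃ ∧
  f (triplePerim x₁ x₂ x₃) = x₁ ∧
  (∀ s ∈ Set.Icc (0 : ℝ) (dist x₁ x₂), ∀ t ∈ Set.Icc (0 : ℝ) (dist x₁ x₂),
    dist (f s) (f t) = |s - t|) ∧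
  (∀ s ∈ Set.Icc (dist x₁ x₂) (dist x₁ x₂ + dist x₂ x₃),
    ∀ t ∈ Set.Icc (dist x₁ x₂) (dist x₁ x₂ + dist x₂ x₃), dist (f s) (f t) = |s - t|) ∧
  (∀ s ∈ Set.Icc (dist x₁ x₂ + dist x₂ x₃) (triplePerim x₁ x₂ x₃),
    ∀ t ∈ Set.Icc (dist x₁ x₂ + dist x₂ x₃) (triplePerim x₁ x₂ x₃),
    dist (f s) (f t) = |s - t|)

/-- The loop `L` is a filling of the oriented triple `(x₁, x₂, x₃)`. -/
def IsFilling (x₁ x₂ x₃ : X) (L : MLoop X) : Prop :=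
  ∃ f : ℝ → X, IsFillingFun x₁ x₂ x₃ f ∧
    ∀ t ∈ Set.Icc (0 : ℝ) 1, L (t : AddCircle (1 : ℝ)) = f (triplePerim x₁ x₂ x₃ * t)

/-- A triple of points of `N` is circumventing (w.r.t. the loop `α`) if each of its
fillings lying in `N` is freely homotopic to `α` or to `α⁻`. -/
def Circumventing (N : Set X) (α : MLoop X) (x₁ x₂ x₃ : X) : Prop :=
  x₁ ∈ N ∧ x₂ ∈ N ∧ x₃ ∈ N ∧
  ∀ L : MLoop X, IsFilling x₁ x₂ x₃ L → Set.range ⇑L ⊆ N →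
    (FreelyHomotopic L α ∨ FreelyHomotopic L (loopReverse α))

/-- The (oriented) triple `(x₁, x₂, x₃)` has winding number `k` with respect to the
oriented loop `α`: some filling of it is freely homotopic to the `k`-fold
concatenation of `α`. -/
def HasTripleWinding (α : MLoop X) (x₁ x₂ x₃ : X) (k : ℤ) : Prop :=
  ∃ L : MLoop X, IsFilling x₁ x₂ x₃ L ∧ FreelyHomotopic L (loopPow α k)

end Loops

open scoped unitInterval NNReal

namespace Path

variable {Y : Type*} [TopologicalSpace Y] {a b : Y}

theorem Homotopic.of_trans_symm {p q : Path a b}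
    (h : (p.trans q.symm).Homotopic (Path.refl a)) : p.Homotopic q := by
  rw [← Homotopic.Quotient.eq] at h ⊢
  calc Homotopic.Quotient.mk p
      = (Homotopic.Quotient.mk (p.trans q.symm)).trans (Homotopic.Quotient.mk q) := by simp
    _ = Homotopic.Quotient.mk q := by simp [h]

theorem Homotopic.refl_of_trans {p : Path a a} {e : Path a b}
    (h : (p.trans e).Homotopic e) : p.Homotopic (Path.refl a) := by
  rw [← Homotopic.Quotient.eq] at h ⊢
  calc Homotopic.Quotient.mk p
      = (Homotopic.Quotient.mk (p.trans e)).trans (Homotopic.Quotient.mk e.symm) := by simp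
    _ = Homotopic.Quotient.mk (Path.refl a) := by simp [h]

theorem Homotopic.subpath_trans_subpath_trans_subpath (γ : Path a b) (t₁ t₂ : I) :
    (((γ.subpath 0 t₁).trans (γ.subpath t₁ t₂)).trans (γ.subpath t₂ 1)).Homotopic
      (γ.cast γ.source γ.target) := by
  rw [← subpath_zero_one]
  exact (Homotopic.hcomp ⟨Homotopy.subpathTransSubpath γ 0 t₁ t₂⟩ (.refl _)).trans
    ⟨Homotopy.subpathTransSubpath γ 0 t₂ 1⟩

end Path

section Lipschitz

variable {Y : Type*} [PseudoMetricSpace Y] {K : ℝ≥0}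

theorem lipschitzOnWith_one_of_dist_eq {f : ℝ → Y} {a b : ℝ}
    (hf : ∀ s ∈ Icc a b, ∀ t ∈ Icc a b, dist (f s) (f t) = |s - t|) :
    LipschitzOnWith 1 f (Icc a b) :=
  LipschitzOnWith.of_dist_le_mul fun s hs t ht => by simp [hf s hs t ht, Real.dist_eq]

theorem LipschitzOnWith.Icc_union_Icc {f : ℝ → Y} {a b c : ℝ}
    (h₁ : LipschitzOnWith K f (Icc a b)) (h₂ : LipschitzOnWith K f (Icc b c)) :
    LipschitzOnWith K f (Icc a c) := by
  have key : ∀ s ∈ Icc a c, ∀ t ∈ Icc a c, s ≤ t → dist (f s) (f t) ≤ K * dist s t := by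
    intro s hs t ht hst
    rcases le_total t b with htb | hbt
    · exact h₁.dist_le_mul s ⟨hs.1, hst.trans htb⟩ t ⟨ht.1, htb⟩
    rcases le_total s b with hsb | hbs
    · calc dist (f s) (f t) ≤ dist (f s) (f b) + dist (f b) (f t) := dist_triangle _ _ _
        _ ≤ K * dist s b + K * dist b t :=
          add_le_add (h₁.dist_le_mul s ⟨hs.1, hsb⟩ b ⟨hs.1.trans hsb, le_rfl⟩)
            (h₂.dist_le_mul b ⟨le_rfl, hbt.trans ht.2⟩ t ⟨hbt, ht.2⟩)
        _ = K * dist s t := by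
          simp only [Real.dist_eq, abs_of_nonpos (sub_nonpos.2 hsb),
            abs_of_nonpos (sub_nonpos.2 hbt), abs_of_nonpos (sub_nonpos.2 hst)]
          ring
    · exact h₂.dist_le_mul s ⟨hbs, hs.2⟩ t ⟨hbt, ht.2⟩
  refine LipschitzOnWith.of_dist_le_mul fun s hs t ht => ?_
  rcases le_total s t with hst | hts
  · exact key s hs t ht hst
  · rw [dist_comm, dist_comm s]
    exact key t ht s hs hts

namespace Path

variable {x y z : Y}

theorem lipschitzWith_extend {γ : Path x y} (hγ : LipschitzWith K γ) :
    LipschitzWith K γ.extend := by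
  have := hγ.comp (LipschitzWith.projIcc zero_le_one)
  rwa [mul_one] at this

theorem lipschitzWith_symm {γ : Path x y} (hγ : LipschitzWith K γ) :
    LipschitzWith K γ.symm :=
  LipschitzWith.of_dist_le_mul fun s t => by
    have := hγ.dist_le_mul (σ s) (σ t)
    rwa [Subtype.dist_eq, unitInterval.coe_symm_eq, unitInterval.coe_symm_eq, dist_sub_left,
      ← Subtype.dist_eq] at this

theorem lipschitzWith_trans {p : Path x y} {q : Path y z} (hp : LipschitzWith K p)
    (hq : LipschitzWith K q) : LipschitzWith (2 * K) (p.trans q) := by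
  have hdouble : ∀ s t : ℝ, (K : ℝ) * dist (2 * s) (2 * t) = 2 * K * dist s t := by
    intro s t
    rw [Real.dist_eq, Real.dist_eq, ← mul_sub, abs_mul, abs_two]
    ring
  have h₁ : LipschitzOnWith (2 * K) (p.trans q).extend (Icc 0 (1 / 2)) :=
    LipschitzOnWith.of_dist_le_mul fun s hs t ht => by
      rw [extend_trans_of_le_half _ _ hs.2, extend_trans_of_le_half _ _ ht.2]
      push_cast
      rw [← hdouble]
      exact (lipschitzWith_extend hp).dist_le_mul _ _
  have h₂ : LipschitzOnWith (2 * K) (p.trans q).extend (Icc (1 / 2) 1) :=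
    LipschitzOnWith.of_dist_le_mul fun s hs t ht => by
      rw [extend_trans_of_half_le _ _ hs.1, extend_trans_of_half_le _ _ ht.1]
      push_cast
      rw [← hdouble, Real.dist_eq, ← sub_sub_sub_cancel_right (2 * s) (2 * t) 1, ← Real.dist_eq]
      exact (lipschitzWith_extend hq).dist_le_mul _ _
  refine LipschitzWith.of_dist_le_mul fun s t => ?_
  simpa [extend_extends', Subtype.dist_eq] using (h₁.Icc_union_Icc h₂).dist_le_mul s s.2 t t.2

theorem lipschitzWith_subpath {γ : Path x y} (hγ : LipschitzWith K γ) (t₀ t₁ : I) :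
    LipschitzWith (K * nndist t₀ t₁) (γ.subpath t₀ t₁) :=
  LipschitzWith.of_dist_le_mul fun s t => by
    refine (hγ.dist_le_mul _ _).trans_eq ?_
    simp only [Subtype.dist_eq, Icc.coe_convexComb, Real.dist_eq, NNReal.coe_mul, coe_nndist]
    rw [show (1 - (s : ℝ)) * t₀ + s * t₁ - ((1 - t) * t₀ + t * t₁) = (t₁ - t₀) * (s - t) by ring,
      abs_mul, abs_sub_comm (t₁ : ℝ)]
    ring

end Path

end Lipschitz

theorem AddCircle.exists_unitInterval_coe (z : AddCircle (1 : ℝ)) :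
    ∃ t : I, ((t : ℝ) : AddCircle (1 : ℝ)) = z := by
  induction z using QuotientAddGroup.induction_on with | H s =>
  exact ⟨⟨Int.fract s, Int.fract_nonneg s, (Int.fract_lt_one s).le⟩, AddCircle.coe_fract s⟩

theorem AddCircle.liftIco_zero_one_coe_apply {B : Type*} {G : ℝ → B} (hG : G 0 = G 1) (t : I) :
    AddCircle.liftIco 1 0 G (t : ℝ) = G t := by
  rcases t.2.2.lt_or_eq with ht | ht
  · exact AddCircle.liftIco_zero_coe_apply ⟨t.2.1, ht⟩
  · rw [ht, AddCircle.coe_period, ← QuotientAddGroup.mk_zero,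
      AddCircle.liftIco_zero_coe_apply (by simp), hG]

section ClosedPaths

variable {X : Type*} [MetricSpace X] {x : X}

theorem FreelyHomotopic.symm {β γ : MLoop X} (h : FreelyHomotopic β γ) : FreelyHomotopic γ β :=
  let ⟨H, _⟩ := h
  ⟨H.symm, subset_univ _⟩

theorem FreelyHomotopic.trans {β γ δ : MLoop X} (h₁ : FreelyHomotopic β γ)
    (h₂ : FreelyHomotopic γ δ) : FreelyHomotopic β δ :=
  let ⟨H₁, _⟩ := h₁
  let ⟨H₂, _⟩ := h₂
  ⟨H₁.trans H₂, subset_univ _⟩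

theorem loop_ext_unitInterval {β β' : MLoop X}
    (h : ∀ t : I, β (t : ℝ) = β' (t : ℝ)) : β = β' := by
  ext z
  obtain ⟨t, rfl⟩ := AddCircle.exists_unitInterval_coe z
  exact h t

namespace Path

def toLoop (γ : Path x x) : MLoop X :=
  ⟨AddCircle.liftIco 1 0 γ.extend,
    AddCircle.liftIco_zero_continuous (by simp) γ.continuous_extend.continuousOn⟩

theorem toLoop_apply (γ : Path x x) (t : I) : γ.toLoop (t : ℝ) = γ t :=
  (AddCircle.liftIco_zero_one_coe_apply (by simp) t).trans (extend_extends' γ t)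

theorem range_toLoop (γ : Path x x) : range γ.toLoop = range γ := by
  refine (range_subset_iff.2 fun z => ?_).antisymm
    (range_subset_iff.2 fun t => ⟨t, γ.toLoop_apply t⟩)
  obtain ⟨t, rfl⟩ := AddCircle.exists_unitInterval_coe z
  exact ⟨t, (γ.toLoop_apply t).symm⟩

theorem loopLength_toLoop_le {γ : Path x x} {K : ℝ≥0} (hγ : LipschitzWith K γ) :
    loopLength γ.toLoop ≤ K := by
  have hext : EqOn (fun t : ℝ => γ.toLoop t) (γ.extend ∘ id) (Icc 0 1) := fun t ht => by
    rw [Function.comp_id, extend_apply γ ht]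
    exact γ.toLoop_apply ⟨t, ht⟩
  calc loopLength γ.toLoop = eVariationOn (γ.extend ∘ id) (Icc 0 1) :=
        eVariationOn.eq_of_eqOn hext
    _ ≤ K * eVariationOn id (Icc (0 : ℝ) 1) :=
      (lipschitzWith_extend hγ).lipschitzOnWith.comp_eVariationOn_le (mapsTo_id _)
    _ = K := by simp

theorem Homotopic.freelyHomotopic_toLoop {γ₀ γ₁ : Path x x} (h : γ₀.Homotopic γ₁) :
    FreelyHomotopic γ₀.toLoop γ₁.toLoop := by
  obtain ⟨F⟩ := h
  -- `t ↦ (s ↦ F (s, t))` is a loop in `C(I, X)`: every stage of `F` is a closed path at `x`.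
  let G : C(ℝ, C(I, X)) := (F.toContinuousMap.comp ContinuousMap.prodSwap).curry.comp
    ⟨projIcc 0 1 zero_le_one, continuous_projIcc⟩
  have hG : G 0 = G 1 := by
    ext s
    simp [G]
  let Gc : C(AddCircle (1 : ℝ), C(I, X)) :=
    ⟨AddCircle.liftIco 1 0 G, AddCircle.liftIco_zero_continuous hG G.continuous.continuousOn⟩
  have hGc (t s : I) : Gc (t : ℝ) s = F (s, t) := by
    change AddCircle.liftIco 1 0 G (t : ℝ) s = _
    rw [AddCircle.liftIco_zero_one_coe_apply hG t]
    simp [G]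
  refine ⟨⟨Gc.uncurry.comp ContinuousMap.prodSwap, fun z => ?_, fun z => ?_⟩, subset_univ _⟩
  all_goals
    obtain ⟨t, rfl⟩ := AddCircle.exists_unitInterval_coe z
    simp [hGc, toLoop_apply]

theorem homotopic_refl_of_nullHomotopicIn_toLoop {U : Set X} {γ : Path x x}
    (h : NullHomotopicIn U γ.toLoop) : γ.Homotopic (Path.refl x) := by
  obtain ⟨y, H, -⟩ := h
  let u : Path (0 : AddCircle (1 : ℝ)) 0 :=
    { toFun t := (t : ℝ)
      continuous_toFun := (AddCircle.continuous_mk' 1).comp continuous_subtype_val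
      source' := by simp
      target' := by simp [AddCircle.coe_period] }
  -- Transporting `u` along the free homotopy conjugates `γ` into a constant loop by the
  -- track `H.evalAt 0` of the base point.
  have hu : (u.map γ.toLoop.continuous).Homotopic (Path.refl _) := by
    refine Homotopic.refl_of_trans ((Path.Homotopic.map_trans_evalAt H u).trans ?_)
    exact Homotopic.trans_refl (H.evalAt 0)
  have h0 : γ.toLoop 0 = x := by simpa using γ.toLoop_apply 0
  have hγ : u.map γ.toLoop.continuous = γ.cast h0 h0 := by
    ext t
    exact γ.toLoop_apply t
  rw [hγ] at hu
  have hrefl : (Path.refl (γ.toLoop 0)).cast h0.symm h0.symm = Path.refl x := by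
    ext
    exact h0
  exact hrefl ▸ hu.pathCast h0.symm h0.symm

end Path

end ClosedPaths

section ShortLoops

variable {X : Type*} [MetricSpace X] {x y : X} {N : Set X} {c : ℝ} {K : ℝ≥0}

namespace Path

theorem homotopic_of_lipschitzWith
    (hshort : ∀ β : MLoop X, range β ⊆ N → loopLength β < ENNReal.ofReal c →
      NullHomotopicIn univ β)
    {p q : Path x y} (hp : LipschitzWith K p) (hq : LipschitzWith K q) (hK : 2 * (K : ℝ) < c)
    (hpN : range p ⊆ N) (hqN : range q ⊆ N) : p.Homotopic q := by
  refine Homotopic.of_trans_symm (homotopic_refl_of_nullHomotopicIn_toLoop (hshort _ ?_ ?_))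
  · rw [range_toLoop, trans_range, symm_range]
    exact union_subset hpN hqN
  · calc loopLength (p.trans q.symm).toLoop ≤ ((2 * K : ℝ≥0) : ℝ≥0∞) :=
          loopLength_toLoop_le (lipschitzWith_trans hp (lipschitzWith_symm hq))
      _ < ENNReal.ofReal c := by
          rw [← ENNReal.ofReal_coe_nnreal]
          exact (ENNReal.ofReal_lt_ofReal_iff ((by positivity : (0 : ℝ) ≤ 2 * K).trans_lt hK)).2
            (by exact_mod_cast hK)

theorem homotopic_of_lipschitzWith_of_eq_of_eq
    (hshort : ∀ β : MLoop X, range β ⊆ N → loopLength β < ENNReal.ofReal c →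
      NullHomotopicIn univ β)
    {γ₁ γ₂ : Path x y} (h₁ : LipschitzWith K γ₁) (h₂ : LipschitzWith K γ₂)
    (hN₁ : range γ₁ ⊆ N) (hN₂ : range γ₂ ⊆ N) {t₁ t₂ : I}
    (ht₁ : γ₁ t₁ = γ₂ t₁) (ht₂ : γ₁ t₂ = γ₂ t₂) (hK₁ : 2 * K * dist 0 t₁ < c)
    (hK₂ : 2 * K * dist t₁ t₂ < c) (hK₃ : 2 * K * dist t₂ 1 < c) :
    γ₁.Homotopic γ₂ := by
  have side (s t : I) (hst : 2 * K * dist s t < c) (hs : γ₁ s = γ₂ s) (ht : γ₁ t = γ₂ t) :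
      (γ₁.subpath s t).Homotopic ((γ₂.subpath s t).cast hs ht) :=
    homotopic_of_lipschitzWith hshort (lipschitzWith_subpath h₁ s t)
      (lipschitzWith_subpath h₂ s t) (by simpa [mul_assoc] using hst)
      (((range_subpath γ₁ s t).trans_subset (image_subset_range _ _)).trans hN₁)
      (((range_subpath γ₂ s t).trans_subset (image_subset_range _ _)).trans hN₂)
  have h0 : γ₁ 0 = γ₂ 0 := by simp
  have h1 : γ₁ 1 = γ₂ 1 := by simp
  have hsides := ((side 0 t₁ hK₁ h0 ht₁).hcomp (side t₁ t₂ hK₂ ht₁ ht₂)).hcomp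
    (side t₂ 1 hK₃ ht₂ h1)
  rw [← cast_trans, ← cast_trans] at hsides
  exact (((Homotopic.subpath_trans_subpath_trans_subpath γ₁ t₁ t₂).symm.trans hsides).trans
    ((Homotopic.subpath_trans_subpath_trans_subpath γ₂ t₁ t₂).pathCast h0 h1)).pathCast
    γ₁.source.symm γ₁.target.symm

end Path

end ShortLoops

section Fillings

variable {X : Type*} [MetricSpace X] {x₁ x₂ x₃ : X}

theorem triplePerim_nonneg (x₁ x₂ x₃ : X) : 0 ≤ triplePerim x₁ x₂ x₃ := by
  unfold triplePerim
  positivity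

theorem IsFillingFun.lipschitzOnWith {f : ℝ → X} (hf : IsFillingFun x₁ x₂ x₃ f) :
    LipschitzOnWith 1 f (Icc 0 (triplePerim x₁ x₂ x₃)) :=
  ((lipschitzOnWith_one_of_dist_eq hf.2.2.2.2.1).Icc_union_Icc
    (lipschitzOnWith_one_of_dist_eq hf.2.2.2.2.2.1)).Icc_union_Icc
    (lipschitzOnWith_one_of_dist_eq hf.2.2.2.2.2.2)

-- For a degenerate triple (`triplePerim = 0`) the division returns `0`, and
-- `triplePerim_mul_fillingTime` still holds.
def fillingTime (x₁ x₂ x₃ : X) (a : ℝ) : I :=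
  projIcc 0 1 zero_le_one (a / triplePerim x₁ x₂ x₃)

theorem triplePerim_mul_fillingTime {a : ℝ} (ha : 0 ≤ a) (haP : a ≤ triplePerim x₁ x₂ x₃) :
    triplePerim x₁ x₂ x₃ * fillingTime x₁ x₂ x₃ a = a := by
  rcases (triplePerim_nonneg x₁ x₂ x₃).eq_or_lt with hP | hP
  · rw [← hP, zero_mul]
    exact (le_antisymm (hP ▸ haP) ha).symm
  · rw [fillingTime, projIcc_of_mem _ ⟨div_nonneg ha hP.le, div_le_one_of_le₀ haP hP.le⟩,
      mul_div_cancel₀ _ hP.ne']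

theorem IsFilling.exists_path {L : MLoop X} (hL : IsFilling x₁ x₂ x₃ L) :
    ∃ ρ : Path x₁ x₁, ρ.toLoop = L ∧ LipschitzWith (triplePerim x₁ x₂ x₃).toNNReal ρ ∧
      ρ (fillingTime x₁ x₂ x₃ (dist x₁ x₂)) = x₂ ∧
      ρ (fillingTime x₁ x₂ x₃ (dist x₁ x₂ + dist x₂ x₃)) = x₃ := by
  obtain ⟨f, hf, hLf⟩ := hL
  set P := triplePerim x₁ x₂ x₃
  have hP : 0 ≤ P := triplePerim_nonneg x₁ x₂ x₃
  have hPsum : P = dist x₁ x₂ + dist x₂ x₃ + dist x₃ x₁ := rfl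
  have hmem (t : I) : P * t ∈ Icc 0 P :=
    ⟨mul_nonneg hP t.2.1, mul_le_of_le_one_right hP t.2.2⟩
  have hlip : LipschitzWith P.toNNReal (fun t : I => f (P * t)) :=
    LipschitzWith.of_dist_le_mul fun s t => by
      refine (hf.lipschitzOnWith.dist_le_mul _ (hmem s) _ (hmem t)).trans_eq ?_
      rw [Real.coe_toNNReal _ hP, Subtype.dist_eq, Real.dist_eq, Real.dist_eq, ← mul_sub,
        abs_mul, abs_of_nonneg hP]
      simp
  let ρ : Path x₁ x₁ :=
    { toFun t := f (P * t)
      continuous_toFun := hlip.continuous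
      source' := by simpa using hf.1
      target' := by simpa using hf.2.2.2.1 }
  have hρ {a : ℝ} (ha : 0 ≤ a) (haP : a ≤ P) : ρ (fillingTime x₁ x₂ x₃ a) = f a :=
    congrArg f (triplePerim_mul_fillingTime ha haP)
  have h₂₃ : 0 ≤ dist x₂ x₃ := dist_nonneg
  have h₃₁ : 0 ≤ dist x₃ x₁ := dist_nonneg
  refine ⟨ρ, loop_ext_unitInterval fun t => ?_, hlip, ?_, ?_⟩
  · rw [Path.toLoop_apply, hLf t t.2]
    rfl
  · rw [hρ dist_nonneg (by linarith)]
    exact hf.2.1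
  · rw [hρ (by positivity) (by linarith)]
    exact hf.2.2.1

theorem IsFilling.freelyHomotopic {N : Set X} {c : ℝ}
    (hshort : ∀ β : MLoop X, range β ⊆ N → loopLength β < ENNReal.ofReal c →
      NullHomotopicIn univ β)
    (hdiam : tripleDiam x₁ x₂ x₃ < c / 2) {L₁ L₂ : MLoop X}
    (hL₁ : IsFilling x₁ x₂ x₃ L₁) (hN₁ : range L₁ ⊆ N)
    (hL₂ : IsFilling x₁ x₂ x₃ L₂) (hN₂ : range L₂ ⊆ N) : FreelyHomotopic L₁ L₂ := by
  obtain ⟨ρ₁, rfl, hlip₁, hρ₁₂, hρ₁₃⟩ := hL₁.exists_path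
  obtain ⟨ρ₂, rfl, hlip₂, hρ₂₂, hρ₂₃⟩ := hL₂.exists_path
  rw [Path.range_toLoop] at hN₁ hN₂
  set P := triplePerim x₁ x₂ x₃
  have hP : 0 ≤ P := triplePerim_nonneg x₁ x₂ x₃
  have hPsum : P = dist x₁ x₂ + dist x₂ x₃ + dist x₃ x₁ := rfl
  have h₁₂ : 0 ≤ dist x₁ x₂ := dist_nonneg
  have h₂₃ : 0 ≤ dist x₂ x₃ := dist_nonneg
  have h₃₁ : 0 ≤ dist x₃ x₁ := dist_nonneg
  simp only [tripleDiam, max_lt_iff] at hdiam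
  have hτ₁ : P * fillingTime x₁ x₂ x₃ (dist x₁ x₂) = dist x₁ x₂ :=
    triplePerim_mul_fillingTime h₁₂ (by linarith)
  have hτ₂ : P * fillingTime x₁ x₂ x₃ (dist x₁ x₂ + dist x₂ x₃) = dist x₁ x₂ + dist x₂ x₃ :=
    triplePerim_mul_fillingTime (add_nonneg h₁₂ h₂₃) (by linarith)
  have hdist (s t : I) : 2 * (P.toNNReal : ℝ) * dist s t = 2 * |P * s - P * t| := by
    rw [Real.coe_toNNReal _ hP, Subtype.dist_eq, Real.dist_eq, mul_assoc, ← abs_of_nonneg hP,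
      ← abs_mul, mul_sub, abs_of_nonneg hP]
  refine Path.Homotopic.freelyHomotopic_toLoop
    (Path.homotopic_of_lipschitzWith_of_eq_of_eq hshort hlip₁ hlip₂ hN₁ hN₂
      (hρ₁₂.trans hρ₂₂.symm) (hρ₁₃.trans hρ₂₃.symm) ?_ ?_ ?_)
  all_goals
    rw [hdist, ← lt_div_iff₀' two_pos, abs_lt]
    simp only [Set.Icc.coe_zero, Set.Icc.coe_one, mul_zero, mul_one, hτ₁, hτ₂]
    constructor <;> linarith

end Fillings

section Statement

variable {X : Type*} [MetricSpace X]

theorem stmt4_general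
    (α : MLoop X) (c : ℝ)
    (N : Set X)
    (hshort : ∀ β : MLoop X, Set.range ⇑β ⊆ N → loopLength β < ENNReal.ofReal c →
      NullHomotopicIn Set.univ β)
    (x₁ x₂ x₃ : X)
    (hdiam : tripleDiam x₁ x₂ x₃ < c / 2) :
    (∀ L₁ L₂ : MLoop X, IsFilling x₁ x₂ x₃ L₁ → Set.range ⇑L₁ ⊆ N →
      IsFilling x₁ x₂ x₃ L₂ → Set.range ⇑L₂ ⊆ N → FreelyHomotopic L₁ L₂) ∧
    (∀ L₁ L₂ : MLoop X, IsFilling x₁ x₂ x₃ L₁ → Set.range ⇑L₁ ⊆ N →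
      IsFilling x₁ x₂ x₃ L₂ → Set.range ⇑L₂ ⊆ N →
      ∀ k : ℤ, FreelyHomotopic L₁ (loopPow α k) → FreelyHomotopic L₂ (loopPow α k)) := by
  have fillings (L₁ L₂ : MLoop X) (hL₁ : IsFilling x₁ x₂ x₃ L₁) (hN₁ : range L₁ ⊆ N)
      (hL₂ : IsFilling x₁ x₂ x₃ L₂) (hN₂ : range L₂ ⊆ N) : FreelyHomotopic L₁ L₂ :=
    hL₁.freelyHomotopic hshort hdiam hN₁ hL₂ hN₂
  exact ⟨fillings, fun L₁ L₂ hL₁ hN₁ hL₂ hN₂ _ hk => (fillings L₁ L₂ hL₁ hN₁ hL₂ hN₂).symm.trans hk⟩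

/-- Remark 3.2, well-definedness of the winding number. -/
theorem stmt4
    (hgeo : GeodesicSpace X) (hloc : LocallyCompactSpace X)
    (hslsc : SemiLocallySimplyConnected X)
    (α : MLoop X) (c : ℝ) (hα : IsGeodesicCircle α c) (hbot : IsBottleneckLoop α)
    (N : Set X) (hNcomp : IsCompact N) (hNconv : GeodesicallyConvex N)
    (hNnbhd : Set.range ⇑α ⊆ interior N)
    (hnc : ¬ NullHomotopicIn Set.univ α)
    (hshort : ∀ β : MLoop X, Set.range ⇑β ⊆ N → loopLength β < ENNReal.ofReal c →
      NullHomotopicIn Set.univ β)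
    (hwind : ∀ β : MLoop X, Set.range ⇑β ⊆ N → ∃ k : ℤ, FreelyHomotopic β (loopPow α k))
    (x₁ x₂ x₃ : X) (h₁ : x₁ ∈ N) (h₂ : x₂ ∈ N) (h₃ : x₃ ∈ N)
    (hdiam : tripleDiam x₁ x₂ x₃ < c / 2) :
    (∀ L₁ L₂ : MLoop X, IsFilling x₁ x₂ x₃ L₁ → Set.range ⇑L₁ ⊆ N →
      IsFilling x₁ x₂ x₃ L₂ → Set.range ⇑L₂ ⊆ N → FreelyHomotopic L₁ L₂) ∧
    (∀ L₁ L₂ : MLoop X, IsFilling x₁ x₂ x₃ L₁ → Set.range ⇑L₁ ⊆ N →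
      IsFilling x₁ x₂ x₃ L₂ → Set.range ⇑L₂ ⊆ N →
      ∀ k : ℤ, FreelyHomotopic L₁ (loopPow α k) → FreelyHomotopic L₂ (loopPow α k)) :=
  stmt4_general α c N hshort x₁ x₂ x₃ hdiam

end Statement

end
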